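/- Let H be two families of parallel lines on T² forming a simple arrangement dual to the two facet vectors (k,1) and (−k,1) of a lattice polygon, giving a lozenge tiling of T². Then a third line L on T² with primitive rational direction intersects at most ⌈(k+1)/2⌉ of the k parallel line segments into which the tiling divides each of the two 'tiers' of one of the lines, when L has direction vector (−1,−1); and a line with direction (1,0) intersects exactly one of the 2k segments. -/

import Mathlib

open Real

/-- The real two-torus, with angular coordinates modulo `2π`. -/
abbrev Torus : Type := AddCircle (2 * Real.pi) × AddCircle (2 * Real.pi)

/-- Translation of a point of the torus by a real vector. -/
noncomputable def tshift (p : Torus) (w : ℝ × ℝ) : Torus :=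
  (p.1 + (w.1 : AddCircle (2 * Real.pi)), p.2 + (w.2 : AddCircle (2 * Real.pi)))

/-- An oriented closed geodesic (line) on the torus, with primitive integer tangent
direction and offset. -/
structure OLine where
  dir : ℤ × ℤ
  primitive : IsCoprime dir.1 dir.2
  c : AddCircle (2 * Real.pi)

namespace OLine

/-- The underlying set of the oriented line: the level set of the conormal form. -/
def carrier (L : OLine) : Set Torus :=
  {θ : Torus | L.dir.2 • θ.1 - L.dir.1 • θ.2 = L.c}

/-- The real tangent vector of the line. -/
def tangent (L : OLine) : ℝ × ℝ := ((L.dir.1 : ℝ), (L.dir.2 : ℝ))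

/-- The right normal `ν = (γ₂, -γ₁)` of the oriented line with tangent `γ`:
crossing the line in the direction `ν` increases the index by one. -/
def rnormal (L : OLine) : ℝ × ℝ := ((L.dir.2 : ℝ), (-L.dir.1 : ℝ))

/-- The left normal `-ν = (-γ₂, γ₁)`. -/
def lnormal (L : OLine) : ℝ × ℝ := ((-L.dir.2 : ℝ), (L.dir.1 : ℝ))

end OLine

/-- A finite oriented line arrangement on the torus. -/
structure Arrangement where
  lines : Finset OLine
  nonempty : lines.Nonempty

namespace Arrangement

/-- The union of the lines of the arrangement, as a subset of the torus. -/
def carrier (A : Arrangement) : Set Torus :=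
  ⋃ L ∈ (A.lines : Set OLine), OLine.carrier L

/-- The point `q` lies on the line `L` of the arrangement and on no other line:
`q` is an interior point of an edge of the arrangement. -/
def OnExactlyOne (A : Arrangement) (q : Torus) (L : OLine) : Prop :=
  L ∈ A.lines ∧ q ∈ L.carrier ∧
    ∀ L' ∈ A.lines, q ∈ OLine.carrier L' → L' = L

/-- The point `q` is a generic (transversal) intersection point of exactly the two
lines `L₁ ≠ L₂` of the arrangement. -/
def OnExactlyTwo (A : Arrangement) (q : Torus) (L₁ L₂ : OLine) : Prop :=
  L₁ ∈ A.lines ∧ L₂ ∈ A.lines ∧ L₁ ≠ L₂ ∧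
    q ∈ L₁.carrier ∧ q ∈ L₂.carrier ∧
    ∀ L' ∈ A.lines, q ∈ OLine.carrier L' → L' = L₁ ∨ L' = L₂

/-- The arrangement is simple: no three distinct lines have a common point. -/
def Simple (A : Arrangement) : Prop :=
  ∀ q : Torus, ∀ L₁ ∈ A.lines, ∀ L₂ ∈ A.lines, ∀ L₃ ∈ A.lines,
    q ∈ OLine.carrier L₁ → q ∈ OLine.carrier L₂ → q ∈ OLine.carrier L₃ →
      L₁ = L₂ ∨ L₁ = L₃ ∨ L₂ = L₃

/-- The vertices of the arrangement: points lying on two distinct lines. -/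
def vertices (A : Arrangement) : Set Torus :=
  {q : Torus | ∃ L₁ ∈ A.lines, ∃ L₂ ∈ A.lines,
    L₁ ≠ L₂ ∧ q ∈ OLine.carrier L₁ ∧ q ∈ OLine.carrier L₂}

end Arrangement

/-- `ι` is constant on the connected components of the complement of the
arrangement. -/
def IndexConst (A : Arrangement) (ι : Torus → ℤ) : Prop :=
  ∀ p q : Torus, q ∈ connectedComponentIn A.carrierᶜ p → ι q = ι p

/-- The crossing rule for Johansson's index map: crossing a line of the arrangement
(tangent `γ`) along the right normal `ν = (γ₂,-γ₁)` increases the index by one. -/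
def CrossingRule (A : Arrangement) (ι : Torus → ℤ) : Prop :=
  ∀ q L, A.OnExactlyOne q L →
    ∃ ε₀ > (0:ℝ), ∀ ε : ℝ, 0 < ε → ε < ε₀ →
      tshift q (ε • L.rnormal) ∉ A.carrier ∧
      tshift q (ε • L.lnormal) ∉ A.carrier ∧
      ι (tshift q (ε • L.rnormal)) = ι (tshift q (ε • L.lnormal)) + 1

/-- A cell of the complement is oriented if along every edge of the arrangement in
its boundary the cell lies on the left of the oriented line through the edge. -/
def IsOrientedCell (A : Arrangement) (P : Set Torus) : Prop :=
  ∀ q L, A.OnExactlyOne q L → q ∈ closure P →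
    ∃ ε₀ > (0:ℝ), ∀ ε : ℝ, 0 < ε → ε < ε₀ → tshift q (ε • L.lnormal) ∈ P

/-- The arrangement is admissible: every edge bounds an oriented region. -/
def Admissible (A : Arrangement) : Prop :=
  ∀ q L, A.OnExactlyOne q L →
    ∃ p : Torus, p ∉ A.carrier ∧
      q ∈ closure (connectedComponentIn A.carrierᶜ p) ∧
      IsOrientedCell A (connectedComponentIn A.carrierᶜ p)

/-!
Reparametrize `H₅` by `s`, so that the segment `ℓ_j` is traced by `s ∈ (j, j + 1)` (`segParam`).
Along `H₅` the coordinates `θ₂`, `θ₁ + θ₂`, `θ₁` grow at rates `k`, `k + 1`, `1`, so `H₅` crosses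
`H₂`, the `(-1,-1)` line and the `(1,0)` line at parameters forming arithmetic progressions with
steps `2`, `2k/(k+1)` and `2k`. By genericity no crossing with `H₂` or the `(1,0)` line is an
integer, so `ℓ_j` meets `H₂` iff `j ≡ ⌊x⌋ (mod 2)` for a crossing `x`: the tiers are the parity
classes; and exactly one crossing with the `(1,0)` line lies in `(0, 2k)`, hence in exactly one
`(j, j + 1)`. For step `2k/(k+1)`, a crossing `x + 2kn/(k+1)` in `(j, j + 1)` with `j = 2q + ε`
gives an integer `N = k(n - q) - q` with `2N` in a fixed open interval of length `k + 1`, and `N`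
determines `q` as `-N mod k`; so each tier has at most `⌈(k+1)/2⌉` such segments.
-/

open Set

lemma AddCircle.coe_eq_coe_iff_exists_int {p x y : ℝ} :
    (x : AddCircle p) = y ↔ ∃ n : ℤ, x = y + n * p := by
  rw [← sub_eq_zero, ← AddCircle.coe_sub, AddCircle.coe_eq_zero_iff]
  refine exists_congr fun n => ?_
  rw [zsmul_eq_mul]
  constructor <;> intro h <;> linarith

lemma AddCircle.coe_affine_eq_iff {p α β c s : ℝ} (hα : α ≠ 0) :
    ((α * s + β : ℝ) : AddCircle p) = c ↔ ∃ n : ℤ, s = (c - β) / α + n * (p / α) := by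
  rw [AddCircle.coe_eq_coe_iff_exists_int]
  refine exists_congr fun n => ?_
  constructor <;> intro h
  · field_simp; linarith
  · subst h; field_simp; ring

lemma Int.card_Ioo_floor_ceil_add_le {x r : ℝ} (hr : 0 ≤ r) :
    ((Finset.Ioo ⌊x⌋ ⌈x + r⌉).card : ℤ) ≤ ⌈r⌉ := by
  rw [Int.card_Ioo]
  have := Int.ceil_add_le x r
  have := Int.ceil_le_floor_add_one x
  have := Int.ceil_nonneg hr
  omega

lemma ne_intCast_of_forall_add_mul_ne_natCast {x : ℝ} {d : ℕ} (hd : 0 < d)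
    (h : ∀ (j : ℕ) (n : ℤ), x + n * d ≠ j) (m : ℤ) : x ≠ m := by
  rintro rfl
  apply h (m % d).toNat (-(m / d))
  have : (0 : ℤ) ≤ m % d := Int.emod_nonneg _ (by omega)
  rw [show (((m % d).toNat : ℕ) : ℝ) = ((m % d : ℤ) : ℝ) by exact_mod_cast Int.toNat_of_nonneg this,
    Int.emod_def]
  push_cast; ring

lemma exists_mem_Ioo_add_mul_iff_modEq {x : ℝ} (hx : ∀ m : ℤ, x ≠ m) (d j : ℤ) :
    (∃ n : ℤ, (j : ℝ) < x + n * d ∧ x + n * d < j + 1) ↔ j ≡ ⌊x⌋ [ZMOD d] := by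
  have hfloor : ∀ n : ℤ, ((j : ℝ) < x + n * d ∧ x + n * d < j + 1) ↔ ⌊x⌋ + n * d = j := by
    intro n
    rw [← Int.floor_add_intCast, Int.floor_eq_iff]
    have : (j : ℝ) ≠ x + ((n * d : ℤ) : ℝ) := fun h =>
      hx (j - n * d) (by push_cast at h ⊢; linarith)
    push_cast at this ⊢
    exact and_congr_left fun _ => ⟨le_of_lt, fun h => lt_of_le_of_ne h this⟩
  simp only [hfloor, Int.modEq_comm (a := j), Int.modEq_iff_dvd, dvd_iff_exists_eq_mul_left]
  exact exists_congr fun n => by constructor <;> intro h <;> linarith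

lemma ncard_setOf_modEq_two_exists_mem_Ioo_add_mul_le (k : ℕ) (x : ℝ) (ε : ℤ) :
    ({j : ℕ | j < 2 * k ∧ (j : ℤ) ≡ ε [ZMOD 2] ∧
      ∃ n : ℤ, (j : ℝ) < x + n * (2 * k / (k + 1)) ∧ x + n * (2 * k / (k + 1)) < j + 1}.ncard : ℤ)
      ≤ ⌈((k : ℚ) + 1) / 2⌉ := by
  set y : ℝ := (k + 1) * ((ε % 2 : ℤ) - x) / 2
  set f : ℤ → ℕ := fun N => (2 * (-N % k) + ε % 2).toNat
  have hsub : {j : ℕ | j < 2 * k ∧ (j : ℤ) ≡ ε [ZMOD 2] ∧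
      ∃ n : ℤ, (j : ℝ) < x + n * (2 * k / (k + 1)) ∧ x + n * (2 * k / (k + 1)) < j + 1} ⊆
      f '' (Finset.Ioo ⌊y⌋ ⌈y + (k + 1) / 2⌉ : Set ℤ) := by
    rintro j ⟨hj, hε, n, h1, h2⟩
    have hk : (0 : ℝ) < k + 1 := by positivity
    set q : ℤ := (j : ℤ) / 2
    have hjq : (j : ℤ) = 2 * q + ε % 2 := by unfold Int.ModEq at hε; omega
    have hjqR : (j : ℝ) = 2 * q + ((ε % 2 : ℤ) : ℝ) := by exact_mod_cast hjq
    rw [show x + n * (2 * k / (k + 1)) = ((k + 1) * x + 2 * k * n) / (k + 1) by field_simp]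
      at h1 h2
    rw [lt_div_iff₀ hk] at h1
    rw [div_lt_iff₀ hk] at h2
    refine ⟨k * (n - q) - q, ?_, ?_⟩
    · rw [Finset.coe_Ioo, Set.mem_Ioo, Int.floor_lt, Int.lt_ceil]
      push_cast [y]
      constructor <;> nlinarith
    · have hq : q < k := by omega
      have : -(k * (n - q) - q) % (k : ℤ) = q := by
        rw [show -(k * (n - q) - q) = q + k * (q - n) by ring, Int.add_mul_emod_self_left]
        exact Int.emod_eq_of_lt (by omega) hq
      simp only [f, this]
      omega
  have hcard := (Set.ncard_le_ncard hsub ((Finset.finite_toSet _).image f)).trans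
    (Set.ncard_image_le (Finset.finite_toSet _))
  rw [Set.ncard_coe_finset] at hcard
  have hceil : ⌈((k : ℝ) + 1) / 2⌉ = ⌈((k : ℚ) + 1) / 2⌉ := by
    rw [← Rat.ceil_cast (α := ℝ)]
    push_cast
    rfl
  exact (Nat.cast_le.mpr hcard).trans (hceil ▸ Int.card_Ioo_floor_ceil_add_le (by positivity))

lemma ncard_setOf_exists_mem_Ioo_add_mul_eq_one {x : ℝ} (hx : ∀ m : ℤ, x ≠ m) {d : ℕ}
    (hd : 0 < d) :
    {j : ℕ | j < d ∧ ∃ n : ℤ, (j : ℝ) < x + n * d ∧ x + n * d < j + 1}.ncard = 1 := by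
  rw [Set.ncard_eq_one]
  refine ⟨(⌊x⌋ % d).toNat, Set.ext fun j => ?_⟩
  have hmod := exists_mem_Ioo_add_mul_iff_modEq hx d j
  push_cast at hmod
  rw [Set.mem_ofPred_eq, hmod, Set.mem_singleton_iff, Int.ModEq]
  have h0 : 0 ≤ ⌊x⌋ % d := Int.emod_nonneg _ (by omega)
  have h1 : ⌊x⌋ % d < d := Int.emod_lt_of_pos _ (by omega)
  constructor
  · rintro ⟨hj, hjx⟩
    rw [Int.emod_eq_of_lt (by omega) (by omega)] at hjx
    omega
  · rintro rfl
    refine ⟨by omega, ?_⟩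
    rw [Int.toNat_of_nonneg h0, Int.emod_emod_of_dvd _ dvd_rfl]

noncomputable def segParam (k : ℕ) (b t0 s : ℝ) : Torus :=
  (((π / k * s + t0 : ℝ) : AddCircle (2 * π)), ((π * s + (k * t0 + b) : ℝ) : AddCircle (2 * π)))

section Segments

variable (k : ℕ) (b t0 : ℝ)

lemma segParam_mem_horizontal_iff (c s : ℝ) :
    segParam k b t0 s ∈ {θ : Torus | θ.2 = (c : AddCircle (2 * π))} ↔
      ∃ n : ℤ, s = (c - (k * t0 + b)) / π + n * (2 : ℤ) := by
  rw [Set.mem_ofPred_eq, segParam, AddCircle.coe_affine_eq_iff pi_ne_zero,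
    mul_div_cancel_right₀ _ pi_ne_zero]
  push_cast
  rfl

lemma segParam_mem_antidiagonal_iff (hk : k ≠ 0) (c s : ℝ) :
    segParam k b t0 s ∈ {θ : Torus | θ.1 + θ.2 = (c : AddCircle (2 * π))} ↔
      ∃ n : ℤ, s = (c - ((k + 1) * t0 + b)) / (π * (k + 1) / k) + n * (2 * k / (k + 1)) := by
  have hk' : (k : ℝ) ≠ 0 := Nat.cast_ne_zero.mpr hk
  rw [Set.mem_ofPred_eq, segParam, ← AddCircle.coe_add,
    show π / k * s + t0 + (π * s + (k * t0 + b)) = π * (k + 1) / k * s + ((k + 1) * t0 + b) by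
      field_simp; ring,
    AddCircle.coe_affine_eq_iff (by positivity),
    show 2 * π / (π * (k + 1) / k) = 2 * k / (k + 1) by field_simp]

lemma segParam_mem_vertical_iff (hk : k ≠ 0) (c s : ℝ) :
    segParam k b t0 s ∈ {θ : Torus | θ.1 = (c : AddCircle (2 * π))} ↔
      ∃ n : ℤ, s = (c - t0) / (π / k) + n * ((2 * k : ℕ) : ℝ) := by
  have hk' : (k : ℝ) ≠ 0 := Nat.cast_ne_zero.mpr hk
  rw [Set.mem_ofPred_eq, segParam, AddCircle.coe_affine_eq_iff (by positivity),
    show 2 * π / (π / k) = ((2 * k : ℕ) : ℝ) by push_cast; field_simp]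

variable {k b t0} {p5 : ℝ → Torus}

lemma p5_eq_segParam (hk : k ≠ 0)
    (hp5 : ∀ t : ℝ, p5 t = ((t : AddCircle (2 * π)), ((k * t + b : ℝ) : AddCircle (2 * π))))
    (s : ℝ) : p5 (t0 + π / k * s) = segParam k b t0 s := by
  rw [hp5, segParam]
  congr 2 <;> field_simp <;> ring

lemma seg_inter_nonempty_iff (hk : 0 < k)
    (hp5 : ∀ t : ℝ, p5 t = ((t : AddCircle (2 * π)), ((k * t + b : ℝ) : AddCircle (2 * π))))
    {Seg : ℕ → Set Torus}
    (hSeg : ∀ j : ℕ, Seg j = p5 '' Ioo (t0 + π * j / k) (t0 + π * (j + 1) / k))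
    {L : Set Torus} {x d : ℝ} (hL : ∀ s, segParam k b t0 s ∈ L ↔ ∃ n : ℤ, s = x + n * d)
    (j : ℕ) :
    (Seg j ∩ L).Nonempty ↔ ∃ n : ℤ, (j : ℝ) < x + n * d ∧ x + n * d < j + 1 := by
  have haffine : (fun s : ℝ => π / k * s + t0) '' Ioo (j : ℝ) (j + 1) =
      Ioo (t0 + π * j / k) (t0 + π * (j + 1) / k) := by
    rw [Set.image_affine_Ioo (by positivity)]
    congr 1 <;> ring
  rw [hSeg, ← haffine, Set.image_image, Set.image_inter_nonempty_iff]
  simp only [Set.Nonempty, Set.mem_inter_iff, Set.mem_preimage, add_comm _ t0,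
    p5_eq_segParam hk.ne' hp5, hL]
  constructor
  · rintro ⟨s, hs, n, rfl⟩
    exact ⟨n, hs⟩
  · rintro ⟨n, hn⟩
    exact ⟨_, hn, n, rfl⟩

lemma add_mul_ne_natCast_of_forall_not_mem (hk : k ≠ 0)
    (hp5 : ∀ t : ℝ, p5 t = ((t : AddCircle (2 * π)), ((k * t + b : ℝ) : AddCircle (2 * π))))
    {L : Set Torus} {x d : ℝ} (hL : ∀ s, segParam k b t0 s ∈ L ↔ ∃ n : ℤ, s = x + n * d)
    (hgen : ∀ j : ℕ, p5 (t0 + π * j / k) ∉ L) (j : ℕ) (n : ℤ) : x + n * d ≠ j := by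
  intro h
  apply hgen j
  rw [← div_mul_eq_mul_div, p5_eq_segParam hk hp5, hL]
  exact ⟨n, h.symm⟩

end Segments

theorem stmt_12_general (k : ℕ) (hk : 1 ≤ k) (b c₁ c₂ c₃ : ℝ)
    (p5 : ℝ → Torus)
    (hp5 : ∀ t : ℝ, p5 t =
      ((t : AddCircle (2 * Real.pi)),
       ((k * t + b : ℝ) : AddCircle (2 * Real.pi))))
    (t0 : ℝ)
    (Seg : ℕ → Set Torus)
    (hSeg : ∀ j : ℕ, Seg j =
      p5 '' Set.Ioo (t0 + Real.pi * j / k) (t0 + Real.pi * (j + 1) / k))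
    (H2 L1 L3 : Set Torus)
    (hH2 : H2 = {θ : Torus | θ.2 = ((c₂ : ℝ) : AddCircle (2 * Real.pi))})
    (hL1 : L1 = {θ : Torus | θ.1 + θ.2 = ((c₁ : ℝ) : AddCircle (2 * Real.pi))})
    (hL3 : L3 = {θ : Torus | θ.1 = ((c₃ : ℝ) : AddCircle (2 * Real.pi))})
    (hgen3 : ∀ j : ℕ, p5 (t0 + Real.pi * j / k) ∉ L3)
    (hgen2 : ∀ j : ℕ, p5 (t0 + Real.pi * j / k) ∉ H2) :
    (({j : ℕ | j < 2 * k ∧ (Seg j ∩ H2).Nonempty ∧ (Seg j ∩ L1).Nonempty}.ncard : ℤ)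
        ≤ ⌈((k : ℚ) + 1) / 2⌉) ∧
    (({j : ℕ | j < 2 * k ∧ ¬ (Seg j ∩ H2).Nonempty ∧ (Seg j ∩ L1).Nonempty}.ncard : ℤ)
        ≤ ⌈((k : ℚ) + 1) / 2⌉) ∧
    {j : ℕ | j < 2 * k ∧ (Seg j ∩ L3).Nonempty}.ncard = 1 := by
  have hk0 : k ≠ 0 := by omega
  have hH2s := hH2 ▸ segParam_mem_horizontal_iff k b t0 c₂
  have hL1s := hL1 ▸ segParam_mem_antidiagonal_iff k b t0 hk0 c₁
  have hL3s := hL3 ▸ segParam_mem_vertical_iff k b t0 hk0 c₃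
  have htier : ∀ j : ℕ, (Seg j ∩ H2).Nonempty ↔ (j : ℤ) ≡ ⌊(c₂ - (k * t0 + b)) / π⌋ [ZMOD 2] :=
    fun j => (seg_inter_nonempty_iff hk hp5 hSeg hH2s j).trans <|
      exists_mem_Ioo_add_mul_iff_modEq (ne_intCast_of_forall_add_mul_ne_natCast two_pos
        (add_mul_ne_natCast_of_forall_not_mem hk0 hp5 hH2s hgen2)) 2 j
  have hL1tier : ∀ ε : ℤ, ({j : ℕ | j < 2 * k ∧ (j : ℤ) ≡ ε [ZMOD 2] ∧
      (Seg j ∩ L1).Nonempty}.ncard : ℤ) ≤ ⌈((k : ℚ) + 1) / 2⌉ := fun ε => by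
    simpa only [seg_inter_nonempty_iff hk hp5 hSeg hL1s] using
      ncard_setOf_modEq_two_exists_mem_Ioo_add_mul_le k _ ε
  refine ⟨?_, ?_, ?_⟩
  · simpa only [htier] using hL1tier ⌊(c₂ - (k * t0 + b)) / π⌋
  · convert hL1tier (⌊(c₂ - (k * t0 + b)) / π⌋ + 1) using 6
    simp only [htier, Int.ModEq]
    exact and_congr_left fun _ => by omega
  · simp only [seg_inter_nonempty_iff hk hp5 hSeg hL3s]
    exact ncard_setOf_exists_mem_Ioo_add_mul_eq_one (ne_intCast_of_forall_add_mul_ne_natCast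
      (by omega) (add_mul_ne_natCast_of_forall_not_mem hk0 hp5 hL3s hgen3)) (by omega)

/-- The lozenge tiling of the torus cut out by the two geodesics of
directions `(1,-k)` and `(1,k)` divides the second one (here parametrized by `p5`)
into `2k` parallel segments, arranged in two tiers according to whether they meet
the horizontal line `H₂`.  A geodesic of direction `(-1,1)` (dual to the facet
`(-1,-1)`) meets at most `⌈(k+1)/2⌉` segments on each tier, and a vertical geodesic
(dual to the facet `(1,0)`) meets exactly one of the `2k` segments. -/
theorem stmt_12 (k : ℕ) (hk : 1 ≤ k) (a b c₁ c₂ c₃ : ℝ)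
    (p5 : ℝ → Torus)
    (hp5 : ∀ t : ℝ, p5 t =
      ((t : AddCircle (2 * Real.pi)),
       ((k * t + b : ℝ) : AddCircle (2 * Real.pi))))
    (t0 : ℝ) (ht0 : t0 = (a - b) / (2 * k))
    (Seg : ℕ → Set Torus)
    (hSeg : ∀ j : ℕ, Seg j =
      p5 '' Set.Ioo (t0 + Real.pi * j / k) (t0 + Real.pi * (j + 1) / k))
    (H2 L1 L3 : Set Torus)
    (hH2 : H2 = {θ : Torus | θ.2 = ((c₂ : ℝ) : AddCircle (2 * Real.pi))})
    (hL1 : L1 = {θ : Torus | θ.1 + θ.2 = ((c₁ : ℝ) : AddCircle (2 * Real.pi))})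
    (hL3 : L3 = {θ : Torus | θ.1 = ((c₃ : ℝ) : AddCircle (2 * Real.pi))})
    (hgen3 : ∀ j : ℕ, p5 (t0 + Real.pi * j / k) ∉ L3)
    (hgen2 : ∀ j : ℕ, p5 (t0 + Real.pi * j / k) ∉ H2) :
    (({j : ℕ | j < 2 * k ∧ (Seg j ∩ H2).Nonempty ∧ (Seg j ∩ L1).Nonempty}.ncard : ℤ)
        ≤ ⌈((k : ℚ) + 1) / 2⌉) ∧
    (({j : ℕ | j < 2 * k ∧ ¬ (Seg j ∩ H2).Nonempty ∧ (Seg j ∩ L1).Nonempty}.ncard : ℤ)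
        ≤ ⌈((k : ℚ) + 1) / 2⌉) ∧
    {j : ℕ | j < 2 * k ∧ (Seg j ∩ L3).Nonempty}.ncard = 1 :=
  stmt_12_general k hk b c₁ c₂ c₃ p5 hp5 t0 Seg hSeg H2 L1 L3 hH2 hL1 hL3 hgen3 hgen2
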